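/- arXiv:math/9909015 — 5 statements merged into one kernel-verified Lean document; each statement's English description precedes it below -/
import Mathlib

section
/- Let T ∈ SL(2,ℤ) with trace 1. Then there exists a basis e₁, e₂ of ℤ² such that in this basis T has matrix [[0,-1],[1,1]]. -/
/-- A positive-leading binary quadratic form of discriminant -3 represents 1. -/
lemma rep_aux : ∀ n : ℕ, ∀ A B C : ℤ, A.natAbs = n → 0 < A → B^2 - 4*A*C = -3 →
    ∃ x y : ℤ, A*x^2 + B*x*y + C*y^2 = 1 := by
  intro n
  induction n using Nat.strong_induction_on with
  | _ n ih =>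
    intro A B C hn hA hd
    rcases eq_or_lt_of_le (by omega : (1:ℤ) ≤ A) with h1 | h2
    · exact ⟨1, 0, by nlinarith⟩
    · -- A ≥ 2
      set k : ℤ := -((B + A) / (2*A)) with hk
      set B' : ℤ := B + 2*A*k with hB'
      set C' : ℤ := A*k^2 + B*k + C with hC'
      have h2A : (0:ℤ) < 2*A := by linarith
      have hmod : B' = (B + A) % (2*A) - A := by
        have := Int.emod_add_mul_ediv (B + A) (2*A)
        simp only [hB', hk]; linarith
      have hBle : -A ≤ B' ∧ B' < A := by
        have h1 := Int.emod_nonneg (B + A) (by linarith : (2*A) ≠ 0)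
        have h2 := Int.emod_lt_of_pos (B + A) h2A
        constructor <;> omega
      have hdisc' : B'^2 - 4*A*C' = -3 := by
        simp only [hB', hC']; ring_nf; linarith [hd]
      have hC'pos : 0 < C' := by nlinarith [sq_nonneg B']
      have hC'lt : C' < A := by nlinarith [hBle.1, hBle.2]
      have hdisc'' : (-B')^2 - 4*C'*A = -3 := by ring_nf; linarith [hdisc']
      obtain ⟨x, y, hxy⟩ := ih C'.natAbs (by
          rw [← hn]; exact Int.natAbs_lt_natAbs_of_nonneg_of_lt (le_of_lt hC'pos) hC'lt)
        C' (-B') A rfl hC'pos hdisc''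
      refine ⟨y - k*x, -x, ?_⟩
      have : A*(y - k*x)^2 + B*(y-k*x)*(-x) + C*(-x)^2
          = C'*x^2 + (-B')*x*y + A*y^2 := by simp only [hB', hC']; ring
      rw [this]; exact hxy

lemma rep (A B C : ℤ) (hd : B^2 - 4*A*C = -3) :
    ∃ x y : ℤ, A*x^2 + B*x*y + C*y^2 = 1 ∨ A*x^2 + B*x*y + C*y^2 = -1 := by
  rcases lt_trichotomy A 0 with h | h | h
  · obtain ⟨x, y, hxy⟩ := rep_aux (-A).natAbs (-A) (-B) (-C) rfl (by linarith) (by linarith [hd])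
    exact ⟨x, y, Or.inr (by linarith [hxy])⟩
  · exfalso; subst h; nlinarith [sq_nonneg B]
  · obtain ⟨x, y, hxy⟩ := rep_aux A.natAbs A B C rfl h hd
    exact ⟨x, y, Or.inl hxy⟩

/-- If `T ∈ SL(2,ℤ)` has trace 1, there is a basis of `ℤ²` (i.e. a matrix `P ∈ GL(2,ℤ)`)
in which `T` has matrix `[[0,-1],[1,1]]`, i.e. `P⁻¹ T P = [[0,-1],[1,1]]`. -/
theorem stmt1 (T : Matrix (Fin 2) (Fin 2) ℤ) (hdet : T.det = 1) (htr : T.trace = 1) :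
    ∃ P : Matrix (Fin 2) (Fin 2) ℤ, IsUnit P.det ∧ T * P = P * !![0, -1; 1, 1] := by
  set a := T 0 0; set b := T 0 1; set c := T 1 0; set d := T 1 1
  have hdet' : a * d - b * c = 1 := by rw [← Matrix.det_fin_two T]; exact hdet
  have htr' : a + d = 1 := by rw [← Matrix.trace_fin_two T]; exact htr
  have hd : (d - a)^2 - 4*c*(-b) = -3 := by nlinarith
  obtain ⟨x, y, hxy⟩ := rep c (d - a) (-b) hd
  refine ⟨!![x, a*x + b*y; y, c*x + d*y], ?_, ?_⟩
  · rw [Matrix.det_fin_two_of]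
    rcases hxy with h | h
    · rw [show x*(c*x+d*y) - (a*x+b*y)*y = 1 by nlinarith]; exact isUnit_one
    · rw [show x*(c*x+d*y) - (a*x+b*y)*y = -1 by nlinarith]; exact isUnit_one.neg
  · have hT : T = !![a, b; c, d] := by
      ext i j; fin_cases i <;> fin_cases j <;> rfl
    rw [hT]
    ext i j
    fin_cases i <;> fin_cases j <;>
      simp [Matrix.mul_apply, Fin.sum_univ_two]
    · linear_combination (a*x+b*y)*htr' - x*hdet'
    · linear_combination (c*x+d*y)*htr' - y*hdet'
end

section
/- Let T ∈ SL(2,ℤ) with trace 3. Then there exists a basis e₁, e₂ of ℤ² such that in this basis T has matrix [[0,-1],[1,3]]. -/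
lemma exists_shift (A B : ℤ) (hA : A ≠ 0) : ∃ n : ℤ, |B + 2*n*A| ≤ |A| := by
  have hApos : 0 < |A| := abs_pos.mpr hA
  set m := 2*|A| with hmdef
  have hm : 0 < m := by omega
  set k := B / m with hk
  set r := B % m with hr
  have hB : m*k + r = B := Int.mul_ediv_add_emod B m
  have h1 : 0 ≤ r := Int.emod_nonneg B (by omega)
  have h2 : r < m := Int.emod_lt_of_pos B hm
  rcases le_or_gt r |A| with h3 | h3
  · rcases abs_cases A with ⟨ha, _⟩ | ⟨ha, _⟩
    · refine ⟨-k, ?_⟩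
      have : B + 2*(-k)*A = r := by rw [hmdef, ha] at hB; linear_combination -hB
      rw [this, abs_of_nonneg h1]; exact h3
    · refine ⟨k, ?_⟩
      have : B + 2*k*A = r := by rw [hmdef, ha] at hB; linear_combination -hB
      rw [this, abs_of_nonneg h1]; exact h3
  · rcases abs_cases A with ⟨ha, _⟩ | ⟨ha, _⟩
    · refine ⟨-k-1, ?_⟩
      have hEq : B + 2*(-k-1)*A = r - m := by rw [hmdef, ha] at hB ⊢; linear_combination -hB
      rw [hEq, abs_of_nonpos (by omega)]; omega
    · refine ⟨k+1, ?_⟩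
      have hEq : B + 2*(k+1)*A = r - m := by rw [hmdef, ha] at hB ⊢; linear_combination -hB
      rw [hEq, abs_of_nonpos (by omega)]; omega

lemma sq_ne_five (B : ℤ) (h : B^2 = 5) : False := by
  have h1 : B ≤ 2 := by nlinarith
  have h2 : -2 ≤ B := by nlinarith
  interval_cases B <;> omega

lemma keyaux (n : ℕ) : ∀ A B C : ℤ, B^2 - 4*A*C = 5 → A.natAbs ≤ C.natAbs → A.natAbs ≤ n →
    ∃ x y : ℤ, A*x^2 + B*x*y + C*y^2 = 1 ∨ A*x^2 + B*x*y + C*y^2 = -1 := by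
  induction n with
  | zero =>
    intro A B C hdisc _ hle
    have hA : A = 0 := by omega
    subst hA
    exact absurd (by linarith : B^2 = 5) (fun h => sq_ne_five B h)
  | succ n IH =>
    intro A B C hdisc hord hle
    rcases eq_or_ne A 0 with hA0 | hA0
    · subst hA0
      exact absurd (by linarith : B^2 = 5) (fun h => sq_ne_five B h)
    rcases eq_or_ne A.natAbs 1 with hA1 | hA1
    · refine ⟨1, 0, ?_⟩
      have : A = 1 ∨ A = -1 := by omega
      rcases this with h | h <;> [left; right] <;> rw [h] <;> ring
    -- now |A| ≥ 2
    have hA2 : 2 ≤ |A| := by rw [Int.abs_eq_natAbs]; exact_mod_cast (by omega : 2 ≤ A.natAbs)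
    obtain ⟨n₀, hn₀⟩ := exists_shift A B hA0
    set B' := B + 2*n₀*A with hB'
    set C' := A*n₀^2 + B*n₀ + C with hC'
    have hdisc' : B'^2 - 4*C'*A = 5 := by rw [hB', hC']; linear_combination hdisc
    have h4 : 4*A*C' = B'^2 - 5 := by linarith
    have hC'lt : |C'| < |A| := by
      have e1 : |4*A*C'| = 4 * |A| * |C'| := by
        rw [abs_mul, abs_mul]; norm_num
      have e2 : |B'^2 - 5| ≤ B'^2 + 5 := by
        rw [abs_le]; constructor <;> nlinarith [sq_nonneg B']
      have e3 : B'^2 ≤ |A|^2 := by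
        calc B'^2 = |B'|^2 := (sq_abs B').symm
        _ ≤ |A|^2 := by nlinarith [abs_nonneg B', abs_nonneg A]
      have e4 : 4 * |A| * |C'| ≤ |A|^2 + 5 := by
        rw [← e1, h4]; exact le_trans e2 (by linarith)
      nlinarith [abs_nonneg C']
    have hnat : C'.natAbs < A.natAbs := by
      rw [Int.abs_eq_natAbs, Int.abs_eq_natAbs] at hC'lt; exact_mod_cast hC'lt
    obtain ⟨x, y, h⟩ := IH C' B' A (by linear_combination hdisc') (by omega) (by omega)
    refine ⟨y + n₀*x, x, ?_⟩
    rcases h with h | h <;> [left; right] <;>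
      · rw [hB', hC'] at h; linear_combination h

lemma key (A B C : ℤ) (hdisc : B^2 - 4*A*C = 5) :
    ∃ x y : ℤ, A*x^2 + B*x*y + C*y^2 = 1 ∨ A*x^2 + B*x*y + C*y^2 = -1 := by
  rcases le_total A.natAbs C.natAbs with h | h
  · exact keyaux A.natAbs A B C hdisc h le_rfl
  · obtain ⟨x, y, hxy⟩ := keyaux C.natAbs C B A (by linear_combination hdisc) h le_rfl
    exact ⟨y, x, by rcases hxy with h' | h' <;> [left; right] <;> linear_combination h'⟩

/-- If `T ∈ SL(2,ℤ)` has trace 3, there is a basis of `ℤ²` (i.e. a matrix `P ∈ GL(2,ℤ)`)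
in which `T` has matrix `[[0,-1],[1,3]]`, i.e. `P⁻¹ T P = [[0,-1],[1,3]]`. -/
theorem stmt2 (T : Matrix (Fin 2) (Fin 2) ℤ) (hdet : T.det = 1) (htr : T.trace = 3) :
    ∃ P : Matrix (Fin 2) (Fin 2) ℤ, IsUnit P.det ∧ T * P = P * !![0, -1; 1, 3] := by
  set a := T 0 0 with ha
  set b := T 0 1 with hb
  set c := T 1 0 with hc
  set d := T 1 1 with hd
  have hT : T = !![a, b; c, d] := by
    rw [ha, hb, hc, hd]; exact Matrix.etaExpand_eq T |>.symm
  rw [Matrix.det_fin_two] at hdet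
  rw [Matrix.trace_fin_two] at htr
  obtain ⟨x, y, hxy⟩ := key c (d - a) (-b) (by linear_combination (a+d+3)*htr - 4*hdet)
  refine ⟨!![x, a*x + b*y; y, c*x + d*y], ?_, ?_⟩
  · rw [Matrix.det_fin_two_of, Int.isUnit_iff]
    rcases hxy with h | h <;> [left; right] <;> linear_combination h
  · rw [hT]
    ext i j
    fin_cases i <;> fin_cases j <;>
      simp [Matrix.mul_apply, Fin.sum_univ_two] <;> ring_nf
    · linear_combination (a*x+b*y)*htr - x*hdet
    · linear_combination (c*x+d*y)*htr - y*hdet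
end

section
/- Let T₁, T₂ be commuting matrices of the form Tᵢ = [[1,0,aᵢ],[0,1,bᵢ],[0,0,1]] in SL(3,ℤ), acting on (ℤ/nℤ)³ by reduction mod n. Suppose that for every n ≥ 2 the common fixed vectors of T₁ᵗ and T₂ᵗ acting on (ℤ/nℤ)³ form a cyclic group of order n. Then a₁b₂ - a₂b₁ = ±1. -/
/-!
A vector `v` is fixed by `Tᵢᵗ` exactly when `aᵢ v₀ + bᵢ v₁ = 0`, so the common fixed vectors mod `n`
are the kernel of `[[a₁, b₁], [a₂, b₂]]` on `(ℤ/nℤ)²` times a free third coordinate. If the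
determinant `d` were not `±1`, a prime `p ∣ d` would make that kernel nontrivial over the field
`ℤ/pℤ`, giving more than `p` common fixed vectors mod `p`.
-/

open Matrix

theorem Matrix.transpose_map_unipotent_mulVec_eq_self_iff {R : Type*} [Ring R] (a b : ℤ)
    (v : Fin 3 → R) :
    ((!![1, 0, a; 0, 1, b; 0, 0, 1]).map (Int.cast : ℤ → R))ᵀ *ᵥ v = v ↔
      (a : R) * v 0 + b * v 1 = 0 := by
  simp [funext_iff, Fin.forall_fin_succ, mulVec, dotProduct, Fin.sum_univ_three]

theorem Matrix.of_fin_two_mulVec_eq_zero_iff {R : Type*} [Ring R] (a₁ b₁ a₂ b₂ : R)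
    (w : Fin 2 → R) :
    !![a₁, b₁; a₂, b₂] *ᵥ w = 0 ↔ a₁ * w 0 + b₁ * w 1 = 0 ∧ a₂ * w 0 + b₂ * w 1 = 0 := by
  simp [funext_iff, Fin.forall_fin_two, dotProduct]

def commonFixedEquiv (R : Type*) [Ring R] (a₁ b₁ a₂ b₂ : ℤ) :
    {v : Fin 3 → R //
        ((!![1, 0, a₁; 0, 1, b₁; 0, 0, 1]).map (Int.cast : ℤ → R))ᵀ *ᵥ v = v ∧
        ((!![1, 0, a₂; 0, 1, b₂; 0, 0, 1]).map (Int.cast : ℤ → R))ᵀ *ᵥ v = v} ≃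
      {w : Fin 2 → R // !![(a₁ : R), b₁; a₂, b₂] *ᵥ w = 0} × R where
  toFun v := (⟨![v.1 0, v.1 1], by
    simpa [of_fin_two_mulVec_eq_zero_iff, transpose_map_unipotent_mulVec_eq_self_iff] using v.2⟩,
    v.1 2)
  invFun wt := ⟨![wt.1.1 0, wt.1.1 1, wt.2], by
    simpa [transpose_map_unipotent_mulVec_eq_self_iff] using
      (of_fin_two_mulVec_eq_zero_iff _ _ _ _ _).mp wt.1.2⟩
  left_inv v := by ext i; fin_cases i <;> rfl
  right_inv wt := by
    ext i
    · fin_cases i <;> rfl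
    · rfl

theorem Matrix.nontrivial_ker_of_det_eq_zero {n A : Type*} [Fintype n] [DecidableEq n]
    [CommRing A] [IsDomain A] {M : Matrix n n A} (h : M.det = 0) :
    Nontrivial {v : n → A // M *ᵥ v = 0} := by
  obtain ⟨v, hv, hMv⟩ := exists_mulVec_eq_zero_iff.mpr h
  exact ⟨⟨v, hMv⟩, ⟨0, mulVec_zero M⟩, fun he => hv (congrArg Subtype.val he)⟩

theorem Int.exists_prime_dvd_of_ne_one_of_ne_neg_one {d : ℤ} (h₁ : d ≠ 1) (h₂ : d ≠ -1) :
    ∃ p : ℕ, p.Prime ∧ (p : ℤ) ∣ d := by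
  obtain ⟨p, hp, hpd⟩ := Nat.exists_prime_and_dvd (n := d.natAbs) fun h =>
    (Int.natAbs_eq_iff.mp h).elim h₁ h₂
  exact ⟨p, hp, Int.natCast_dvd.mpr hpd⟩

/-- If `T₁, T₂` are the commuting unipotent matrices `[[1,0,aᵢ],[0,1,bᵢ],[0,0,1]]` and for
every `n ≥ 2` the common fixed vectors of `T₁ᵗ, T₂ᵗ` on `(ℤ/nℤ)³` form a (cyclic) group
with exactly `n` elements, then `a₁b₂ - a₂b₁ = ±1`. -/
theorem stmt8 (a₁ b₁ a₂ b₂ : ℤ)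
    (h : ∀ n : ℕ, 2 ≤ n →
      Nat.card {v : Fin 3 → ZMod n //
        (Matrix.transpose ((!![1, 0, a₁; 0, 1, b₁; 0, 0, 1]).map (Int.cast : ℤ → ZMod n))).mulVec v = v ∧
        (Matrix.transpose ((!![1, 0, a₂; 0, 1, b₂; 0, 0, 1]).map (Int.cast : ℤ → ZMod n))).mulVec v = v} = n) :
    a₁ * b₂ - a₂ * b₁ = 1 ∨ a₁ * b₂ - a₂ * b₁ = -1 := by
  by_contra! hd
  obtain ⟨p, hp, hpd⟩ := Int.exists_prime_dvd_of_ne_one_of_ne_neg_one hd.1 hd.2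
  have := Fact.mk hp
  have hdet : (!![(a₁ : ZMod p), b₁; a₂, b₂]).det = 0 := by
    rw [det_fin_two_of, mul_comm (b₁ : ZMod p)]
    exact_mod_cast (ZMod.intCast_zmod_eq_zero_iff_dvd _ p).mpr hpd
  have := nontrivial_ker_of_det_eq_zero hdet
  have hker := Finite.one_lt_card_iff_nontrivial.mpr this
  have hcard := h p hp.two_le
  rw [Nat.card_congr (commonFixedEquiv _ a₁ b₁ a₂ b₂), Nat.card_prod, Nat.card_zmod] at hcard
  nlinarith [hp.two_le]
end

section
/- Let G be a subgroup of GL(3,ℚ) consisting of unipotent matrices and acting on ℚ³. Then the space of G-invariant vectors (ℚ³)^G is nonzero. -/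
open Matrix

private lemma cube_of_traces (x : Matrix (Fin 3) (Fin 3) ℚ) (h1 : x.trace = 0)
    (h2 : (x * x).trace = 0) (h3 : (x * x * x).trace = 0) : x * x * x = 0 := by
  have q00 : (x*x*x) 0 0 = 0 := by
    simp only [Matrix.trace_fin_three, Matrix.mul_apply, Fin.sum_univ_three] at h1 h2 h3 ⊢
    linear_combination ((x 0 0 * x 0 0 + x 0 1 * x 1 0 + x 0 2 * x 2 0) - x 0 0 * (x 0 0 + x 1 1 + x 2 2) / 2 + ((x 0 0 + x 1 1 + x 2 2)^2 - 3 * (x 0 0 * x 0 0 + x 0 1 * x 1 0 + x 0 2 * x 2 0 + x 1 0 * x 0 1 + x 1 1 * x 1 1 + x 1 2 * x 2 1 + x 2 0 * x 0 2 + x 2 1 * x 1 2 + x 2 2 * x 2 2)) / 6) * h1 + (x 0 0 / 2) * h2 + (1/3 : ℚ) * h3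
  have q01 : (x*x*x) 0 1 = 0 := by
    simp only [Matrix.trace_fin_three, Matrix.mul_apply, Fin.sum_univ_three] at h1 h2 h3 ⊢
    linear_combination ((x 0 0 * x 0 1 + x 0 1 * x 1 1 + x 0 2 * x 2 1) - x 0 1 * (x 0 0 + x 1 1 + x 2 2) / 2) * h1 + (x 0 1 / 2) * h2
  have q02 : (x*x*x) 0 2 = 0 := by
    simp only [Matrix.trace_fin_three, Matrix.mul_apply, Fin.sum_univ_three] at h1 h2 h3 ⊢
    linear_combination ((x 0 0 * x 0 2 + x 0 1 * x 1 2 + x 0 2 * x 2 2) - x 0 2 * (x 0 0 + x 1 1 + x 2 2) / 2) * h1 + (x 0 2 / 2) * h2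
  have q10 : (x*x*x) 1 0 = 0 := by
    simp only [Matrix.trace_fin_three, Matrix.mul_apply, Fin.sum_univ_three] at h1 h2 h3 ⊢
    linear_combination ((x 1 0 * x 0 0 + x 1 1 * x 1 0 + x 1 2 * x 2 0) - x 1 0 * (x 0 0 + x 1 1 + x 2 2) / 2) * h1 + (x 1 0 / 2) * h2
  have q11 : (x*x*x) 1 1 = 0 := by
    simp only [Matrix.trace_fin_three, Matrix.mul_apply, Fin.sum_univ_three] at h1 h2 h3 ⊢
    linear_combination ((x 1 0 * x 0 1 + x 1 1 * x 1 1 + x 1 2 * x 2 1) - x 1 1 * (x 0 0 + x 1 1 + x 2 2) / 2 + ((x 0 0 + x 1 1 + x 2 2)^2 - 3 * (x 0 0 * x 0 0 + x 0 1 * x 1 0 + x 0 2 * x 2 0 + x 1 0 * x 0 1 + x 1 1 * x 1 1 + x 1 2 * x 2 1 + x 2 0 * x 0 2 + x 2 1 * x 1 2 + x 2 2 * x 2 2)) / 6) * h1 + (x 1 1 / 2) * h2 + (1/3 : ℚ) * h3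
  have q12 : (x*x*x) 1 2 = 0 := by
    simp only [Matrix.trace_fin_three, Matrix.mul_apply, Fin.sum_univ_three] at h1 h2 h3 ⊢
    linear_combination ((x 1 0 * x 0 2 + x 1 1 * x 1 2 + x 1 2 * x 2 2) - x 1 2 * (x 0 0 + x 1 1 + x 2 2) / 2) * h1 + (x 1 2 / 2) * h2
  have q20 : (x*x*x) 2 0 = 0 := by
    simp only [Matrix.trace_fin_three, Matrix.mul_apply, Fin.sum_univ_three] at h1 h2 h3 ⊢
    linear_combination ((x 2 0 * x 0 0 + x 2 1 * x 1 0 + x 2 2 * x 2 0) - x 2 0 * (x 0 0 + x 1 1 + x 2 2) / 2) * h1 + (x 2 0 / 2) * h2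
  have q21 : (x*x*x) 2 1 = 0 := by
    simp only [Matrix.trace_fin_three, Matrix.mul_apply, Fin.sum_univ_three] at h1 h2 h3 ⊢
    linear_combination ((x 2 0 * x 0 1 + x 2 1 * x 1 1 + x 2 2 * x 2 1) - x 2 1 * (x 0 0 + x 1 1 + x 2 2) / 2) * h1 + (x 2 1 / 2) * h2
  have q22 : (x*x*x) 2 2 = 0 := by
    simp only [Matrix.trace_fin_three, Matrix.mul_apply, Fin.sum_univ_three] at h1 h2 h3 ⊢
    linear_combination ((x 2 0 * x 0 2 + x 2 1 * x 1 2 + x 2 2 * x 2 2) - x 2 2 * (x 0 0 + x 1 1 + x 2 2) / 2 + ((x 0 0 + x 1 1 + x 2 2)^2 - 3 * (x 0 0 * x 0 0 + x 0 1 * x 1 0 + x 0 2 * x 2 0 + x 1 0 * x 0 1 + x 1 1 * x 1 1 + x 1 2 * x 2 1 + x 2 0 * x 0 2 + x 2 1 * x 1 2 + x 2 2 * x 2 2)) / 6) * h1 + (x 2 2 / 2) * h2 + (1/3 : ℚ) * h3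
  ext i j
  fin_cases i <;> fin_cases j <;> first
    | exact q00 | exact q01 | exact q02 | exact q10 | exact q11 | exact q12
    | exact q20 | exact q21 | exact q22

/-- Kolchin's theorem in dimension 3: a subgroup of `GL(3,ℚ)` consisting of unipotent
matrices has a nonzero invariant vector in `ℚ³`. -/
theorem stmt10 (G : Subgroup (Matrix.GeneralLinearGroup (Fin 3) ℚ))
    (hu : ∀ g ∈ G, ∃ n : ℕ, ((g : Matrix (Fin 3) (Fin 3) ℚ) - 1) ^ n = 0) :
    ∃ v : Fin 3 → ℚ, v ≠ 0 ∧ ∀ g ∈ G, (g : Matrix (Fin 3) (Fin 3) ℚ).mulVec v = v := by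
  classical
  set S : Set (Matrix (Fin 3) (Fin 3) ℚ) :=
    {m | ∃ g ∈ G, m = (g : Matrix (Fin 3) (Fin 3) ℚ) - 1} with hSdef
  set A : Submodule ℚ (Matrix (Fin 3) (Fin 3) ℚ) := Submodule.span ℚ S with hAdef
  -- every element of G has trace 3
  have htr3 : ∀ g ∈ G, (g : Matrix (Fin 3) (Fin 3) ℚ).trace = 3 := by
    intro g hg
    obtain ⟨n, hn⟩ := hu g hg
    have h0 : ((g : Matrix (Fin 3) (Fin 3) ℚ) - 1).trace = 0 :=
      (Matrix.isNilpotent_trace_of_isNilpotent ⟨n, hn⟩).eq_zero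
    rw [Matrix.trace_sub, Matrix.trace_one] at h0
    simp only [Fintype.card_fin] at h0
    push_cast at h0
    linarith
  -- trace vanishes on A
  have htrA : ∀ x ∈ A, x.trace = 0 := by
    intro x hx
    induction hx using Submodule.span_induction with
    | mem m hm =>
      obtain ⟨g, hg, rfl⟩ := hm
      rw [Matrix.trace_sub, Matrix.trace_one, htr3 g hg]
      simp
    | zero => simp
    | add u v _ _ hu hv => rw [Matrix.trace_add, hu, hv, add_zero]
    | smul r u _ hu => rw [Matrix.trace_smul, hu, smul_zero]
  -- A is closed under multiplication
  have hm2 : ∀ {x y : Matrix (Fin 3) (Fin 3) ℚ}, x ∈ A → y ∈ A → x * y ∈ A := by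
    intro x y hx hy
    induction hx, hy using Submodule.span_induction₂ with
    | mem_mem m n hm hn =>
      obtain ⟨g, hg, rfl⟩ := hm
      obtain ⟨h, hh, rfl⟩ := hn
      have key : ((g : Matrix (Fin 3) (Fin 3) ℚ) - 1) * ((h : Matrix (Fin 3) (Fin 3) ℚ) - 1) =
          (((g * h : Matrix.GeneralLinearGroup (Fin 3) ℚ) : Matrix (Fin 3) (Fin 3) ℚ) - 1)
            - ((g : Matrix (Fin 3) (Fin 3) ℚ) - 1)
            - ((h : Matrix (Fin 3) (Fin 3) ℚ) - 1) := by
        rw [Units.val_mul]; noncomm_ring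
      rw [key]
      exact sub_mem (sub_mem (Submodule.subset_span ⟨g * h, mul_mem hg hh, rfl⟩)
        (Submodule.subset_span ⟨g, hg, rfl⟩)) (Submodule.subset_span ⟨h, hh, rfl⟩)
    | zero_left y hy => rw [zero_mul]; exact zero_mem _
    | zero_right x hx => rw [mul_zero]; exact zero_mem _
    | add_left x y z hx hy hz h1 h2 => rw [add_mul]; exact add_mem h1 h2
    | add_right x y z hx hy hz h1 h2 => rw [mul_add]; exact add_mem h1 h2
    | smul_left r x y hx hy h1 => rw [smul_mul_assoc]; exact Submodule.smul_mem _ _ h1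
    | smul_right r x y hx hy h1 => rw [mul_smul_comm]; exact Submodule.smul_mem _ _ h1
  -- every element of A has vanishing cube
  have hcube : ∀ x ∈ A, x * x * x = 0 := fun x hx =>
    cube_of_traces x (htrA x hx) (htrA _ (hm2 hx hx)) (htrA _ (hm2 (hm2 hx hx) hx))
  -- symmetrized cube identity on A
  have hT : ∀ u ∈ A, ∀ v ∈ A, ∀ w ∈ A,
      u*v*w + u*w*v + v*u*w + v*w*u + w*u*v + w*v*u = 0 := by
    intro u huA v hvA w hwA
    have c1 := hcube (u+v+w) (add_mem (add_mem huA hvA) hwA)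
    have c2 := hcube (u+v) (add_mem huA hvA)
    have c3 := hcube (u+w) (add_mem huA hwA)
    have c4 := hcube (v+w) (add_mem hvA hwA)
    have c5 := hcube u huA
    have c6 := hcube v hvA
    have c7 := hcube w hwA
    have expand : u*v*w + u*w*v + v*u*w + v*w*u + w*u*v + w*v*u =
        (u+v+w)*(u+v+w)*(u+v+w) - (u+v)*(u+v)*(u+v) - (u+w)*(u+w)*(u+w)
          - (v+w)*(v+w)*(v+w) + u*u*u + v*v*v + w*w*w := by noncomm_ring
    rw [expand, c1, c2, c3, c4, c5, c6, c7]
    simp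
  -- the key Nagata–Higman style identity on A : b² a c² = 0
  have hkey : ∀ a ∈ A, ∀ b ∈ A, ∀ c ∈ A, b*b*(a*(c*c)) = 0 := by
    intro a ha b hb c hc
    have h1 := hT (b*b*a) (hm2 (hm2 hb hb) ha) (c) hc (c) hc
    have h2 := hT (a) ha (b) hb (b) hb
    have h3 := hT (a) ha (b*b) (hm2 hb hb) (c) hc
    have h4 := hT (a) ha (b*b) (hm2 hb hb) (c*c) (hm2 hc hc)
    have h5 := hT (a) ha (c) hc (c*b*b) (hm2 (hm2 hc hb) hb)
    have h6 := hT (b) hb (b*a) (hm2 hb ha) (c*c) (hm2 hc hc)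
    have h7 := hT (b*a) (hm2 hb ha) (c) hc (c) hc
    have h8 := hT (b*a) (hm2 hb ha) (c) hc (c*b) (hm2 hc hb)
    have h9 := hT (b) hb (c) hc (c*b*a) (hm2 (hm2 hc hb) ha)
    have h10 := hT (b) hb (b) hb (c*c) (hm2 hc hc)
    have h12 := hT (a*b) (hm2 ha hb) (b) hb (c) hc
    have h13 := hT (a) ha (b) hb (c) hc
    have hcomb : b*b*(a*(c*c)) + b*b*(a*(c*c)) + b*b*(a*(c*c)) + b*b*(a*(c*c)) + b*b*(a*(c*c)) + b*b*(a*(c*c)) =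
        (((b*b*a)*c*c + (b*b*a)*c*c + c*(b*b*a)*c + c*c*(b*b*a) + c*(b*b*a)*c + c*c*(b*b*a)) + ((b*b*a)*c*c + (b*b*a)*c*c + c*(b*b*a)*c + c*c*(b*b*a) + c*(b*b*a)*c + c*c*(b*b*a)))
        - c*(a*b*b + a*b*b + b*a*b + b*b*a + b*a*b + b*b*a)*c
        + (c*(a*(b*b)*c + a*c*(b*b) + (b*b)*a*c + (b*b)*c*a + c*a*(b*b) + c*(b*b)*a) + c*(a*(b*b)*c + a*c*(b*b) + (b*b)*a*c + (b*b)*c*a + c*a*(b*b) + c*(b*b)*a))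
        + ((a*(b*b)*(c*c) + a*(c*c)*(b*b) + (b*b)*a*(c*c) + (b*b)*(c*c)*a + (c*c)*a*(b*b) + (c*c)*(b*b)*a) + (a*(b*b)*(c*c) + a*(c*c)*(b*b) + (b*b)*a*(c*c) + (b*b)*(c*c)*a + (c*c)*a*(b*b) + (c*c)*(b*b)*a))
        - ((a*c*(c*b*b) + a*(c*b*b)*c + c*a*(c*b*b) + c*(c*b*b)*a + (c*b*b)*a*c + (c*b*b)*c*a) + (a*c*(c*b*b) + a*(c*b*b)*c + c*a*(c*b*b) + c*(c*b*b)*a + (c*b*b)*a*c + (c*b*b)*c*a))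
        + ((b*(b*a)*(c*c) + b*(c*c)*(b*a) + (b*a)*b*(c*c) + (b*a)*(c*c)*b + (c*c)*b*(b*a) + (c*c)*(b*a)*b) + (b*(b*a)*(c*c) + b*(c*c)*(b*a) + (b*a)*b*(c*c) + (b*a)*(c*c)*b + (c*c)*b*(b*a) + (c*c)*(b*a)*b))
        - b*((b*a)*c*c + (b*a)*c*c + c*(b*a)*c + c*c*(b*a) + c*(b*a)*c + c*c*(b*a))
        - (((b*a)*c*(c*b) + (b*a)*(c*b)*c + c*(b*a)*(c*b) + c*(c*b)*(b*a) + (c*b)*(b*a)*c + (c*b)*c*(b*a)) + ((b*a)*c*(c*b) + (b*a)*(c*b)*c + c*(b*a)*(c*b) + c*(c*b)*(b*a) + (c*b)*(b*a)*c + (c*b)*c*(b*a)))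
        + ((b*c*(c*b*a) + b*(c*b*a)*c + c*b*(c*b*a) + c*(c*b*a)*b + (c*b*a)*b*c + (c*b*a)*c*b) + (b*c*(c*b*a) + b*(c*b*a)*c + c*b*(c*b*a) + c*(c*b*a)*b + (c*b*a)*b*c + (c*b*a)*c*b))
        - (b*b*(c*c) + b*(c*c)*b + b*b*(c*c) + b*(c*c)*b + (c*c)*b*b + (c*c)*b*b)*a
        - (c*c*(a*b*b + a*b*b + b*a*b + b*b*a + b*a*b + b*b*a) + c*c*(a*b*b + a*b*b + b*a*b + b*b*a + b*a*b + b*b*a))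
        - (((a*b)*b*c + (a*b)*c*b + b*(a*b)*c + b*c*(a*b) + c*(a*b)*b + c*b*(a*b))*c + ((a*b)*b*c + (a*b)*c*b + b*(a*b)*c + b*c*(a*b) + c*(a*b)*b + c*b*(a*b))*c)
        + ((a*b*c + a*c*b + b*a*c + b*c*a + c*a*b + c*b*a)*(b*c) + (a*b*c + a*c*b + b*a*c + b*c*a + c*a*b + c*b*a)*(b*c)) := by noncomm_ring
    rw [h1, h2, h3, h4, h5, h6, h7, h8, h9, h10, h12, h13] at hcomb
    simp only [mul_zero, zero_mul, add_zero, zero_add, sub_zero, zero_sub, neg_zero] at hcomb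
    have h6X : (6:ℚ) • (b*b*(a*(c*c))) = 0 := by
      rw [show (6:ℚ) • (b*b*(a*(c*c))) = b*b*(a*(c*c)) + b*b*(a*(c*c)) + b*b*(a*(c*c)) + b*b*(a*(c*c)) + b*b*(a*(c*c)) + b*b*(a*(c*c)) by module]
      exact hcomb
    exact (smul_eq_zero.mp h6X).resolve_left (by norm_num)
  -- squares kill triple products from the left
  have hK1 : ∀ s ∈ A, ∀ a ∈ A, ∀ x ∈ A, ∀ y ∈ A, ∀ z ∈ A,
      s*s*(a*(x*y*z)) = 0 := by
    intro s hs a ha x hx y hy z hz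
    have k1 := hkey a ha s hs (x+y*z) (add_mem hx (hm2 hy hz))
    have k2 := hkey a ha s hs x hx
    have k3 := hkey a ha s hs (y*z) (hm2 hy hz)
    have k4 := hkey a ha s hs (y+z*x) (add_mem hy (hm2 hz hx))
    have k5 := hkey a ha s hs y hy
    have k6 := hkey a ha s hs (z*x) (hm2 hz hx)
    have k7 := hkey a ha s hs (z+x*y) (add_mem hz (hm2 hx hy))
    have k8 := hkey a ha s hs z hz
    have k9 := hkey a ha s hs (x*y) (hm2 hx hy)
    have e : s*s*(a*(x*y*z)) + s*s*(a*(x*y*z)) =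
        s*s*(a*((x+y*z)*(x+y*z))) - s*s*(a*(x*x)) - s*s*(a*((y*z)*(y*z)))
          - s*s*(a*((y+z*x)*(y+z*x))) + s*s*(a*(y*y)) + s*s*(a*((z*x)*(z*x)))
          + s*s*(a*((z+x*y)*(z+x*y))) - s*s*(a*(z*z)) - s*s*(a*((x*y)*(x*y))) := by
      noncomm_ring
    rw [k1, k2, k3, k4, k5, k6, k7, k8, k9] at e
    simp only [add_zero, zero_add, sub_zero, zero_sub, neg_zero, sub_self] at e
    have h2X : (2:ℚ) • (s*s*(a*(x*y*z))) = 0 := by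
      rw [two_smul]; exact e
    exact (smul_eq_zero.mp h2X).resolve_left (by norm_num)
  -- any seven elements of A multiply to zero
  have hK2 : ∀ x ∈ A, ∀ y ∈ A, ∀ z ∈ A, ∀ a ∈ A, ∀ u ∈ A, ∀ v ∈ A, ∀ w ∈ A,
      x*y*z*(a*(u*v*w)) = 0 := by
    intro x hx y hy z hz a ha u huA v hv w hw
    have k1 := hK1 (x+y*z) (add_mem hx (hm2 hy hz)) a ha u huA v hv w hw
    have k2 := hK1 x hx a ha u huA v hv w hw
    have k3 := hK1 (y*z) (hm2 hy hz) a ha u huA v hv w hw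
    have k4 := hK1 (y+z*x) (add_mem hy (hm2 hz hx)) a ha u huA v hv w hw
    have k5 := hK1 y hy a ha u huA v hv w hw
    have k6 := hK1 (z*x) (hm2 hz hx) a ha u huA v hv w hw
    have k7 := hK1 (z+x*y) (add_mem hz (hm2 hx hy)) a ha u huA v hv w hw
    have k8 := hK1 z hz a ha u huA v hv w hw
    have k9 := hK1 (x*y) (hm2 hx hy) a ha u huA v hv w hw
    have e : x*y*z*(a*(u*v*w)) + x*y*z*(a*(u*v*w)) =
        (x+y*z)*(x+y*z)*(a*(u*v*w)) - x*x*(a*(u*v*w)) - (y*z)*(y*z)*(a*(u*v*w))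
          - (y+z*x)*(y+z*x)*(a*(u*v*w)) + y*y*(a*(u*v*w)) + (z*x)*(z*x)*(a*(u*v*w))
          + (z+x*y)*(z+x*y)*(a*(u*v*w)) - z*z*(a*(u*v*w)) - (x*y)*(x*y)*(a*(u*v*w)) := by
      noncomm_ring
    rw [k1, k2, k3, k4, k5, k6, k7, k8, k9] at e
    simp only [add_zero, zero_add, sub_zero, zero_sub, neg_zero, sub_self] at e
    have h2X : (2:ℚ) • (x*y*z*(a*(u*v*w))) = 0 := by
      rw [two_smul]; exact e
    exact (smul_eq_zero.mp h2X).resolve_left (by norm_num)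
  -- lift to submodule products
  have h7 : ∀ m ∈ A*A*A, ∀ a ∈ A, ∀ n ∈ A*A*A, m * (a * n) = 0 := by
    intro m hm
    refine Submodule.mul_induction_on hm ?_ ?_
    · intro p hp z hz
      refine Submodule.mul_induction_on hp ?_ ?_
      · intro x hx y hy a ha n hn
        refine Submodule.mul_induction_on hn ?_ ?_
        · intro q hq w hw
          refine Submodule.mul_induction_on hq ?_ ?_
          · intro u huA v hv
            have := hK2 x hx y hy z hz a ha u huA v hv w hw
            simpa only [mul_assoc] using this
          · intro q1 q2 hone htwo
            rw [add_mul, mul_add, mul_add, hone, htwo, add_zero]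
        · intro n1 n2 hone htwo
          rw [mul_add, mul_add, hone, htwo, add_zero]
      · intro p1 p2 hone htwo a ha n hn
        rw [add_mul, add_mul, hone a ha n hn, htwo a ha n hn, add_zero]
    · intro m1 m2 hone htwo a ha n hn
      rw [add_mul, hone a ha n hn, htwo a ha n hn, add_zero]
  have hA7 : A ^ 7 = ⊥ := by
    have h3 : A ^ 3 = A*A*A := by rw [pow_succ, pow_succ, pow_one]
    have e7 : A ^ 7 = (A*A*A) * (A * (A*A*A)) := by
      rw [show (7:ℕ) = 3 + (1 + 3) from rfl, pow_add A 3 (1+3), pow_add A 1 3, pow_one, h3]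
    rw [e7, eq_bot_iff]
    refine Submodule.mul_le.mpr ?_
    intro m hm r hr
    refine Submodule.mul_induction_on hr ?_ ?_
    · intro a ha n hn
      rw [Submodule.mem_bot, h7 m hm a ha n hn]
    · intro r1 r2 hone htwo
      rw [Submodule.mem_bot] at hone htwo ⊢
      rw [mul_add, hone, htwo, add_zero]
  -- descent: find the last nonzero power of A
  have hex : ∃ j : ℕ, A ^ (j+1) = ⊥ := ⟨6, hA7⟩
  set k := Nat.find hex with hkdef
  have hk : A ^ (k+1) = ⊥ := Nat.find_spec hex
  have hkne : A ^ k ≠ ⊥ := by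
    match hk' : k with
    | 0 =>
      rw [pow_zero]
      intro hbot
      have h1 : (1 : Matrix (Fin 3) (Fin 3) ℚ) ∈ (1 : Submodule ℚ (Matrix (Fin 3) (Fin 3) ℚ)) :=
        Submodule.one_le.mp le_rfl
      rw [hbot, Submodule.mem_bot] at h1
      exact one_ne_zero h1
    | j + 1 => exact Nat.find_min hex (by omega)
  obtain ⟨m, hmA, hm0⟩ := Submodule.exists_mem_ne_zero_of_ne_bot hkne
  have hvex : ∃ v0 : Fin 3 → ℚ, m.mulVec v0 ≠ 0 := by
    by_contra hall
    push_neg at hall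
    apply hm0
    ext i j
    have := congrFun (hall (Pi.single j 1)) i
    simpa [Matrix.mulVec_single] using this
  obtain ⟨v0, hv0⟩ := hvex
  refine ⟨m.mulVec v0, hv0, ?_⟩
  intro g hg
  have hmem : ((g : Matrix (Fin 3) (Fin 3) ℚ) - 1) * m ∈ A ^ (k+1) := by
    rw [pow_succ']
    exact Submodule.mul_mem_mul (Submodule.subset_span ⟨g, hg, rfl⟩) hmA
  rw [hk, Submodule.mem_bot] at hmem
  have h2 : ((g : Matrix (Fin 3) (Fin 3) ℚ) - 1).mulVec (m.mulVec v0) = 0 := by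
    rw [Matrix.mulVec_mulVec, hmem, Matrix.zero_mulVec]
  rw [Matrix.sub_mulVec, Matrix.one_mulVec, sub_eq_zero] at h2
  exact h2
end

section
/- Let N = ℤ⁵ with basis e₀,…,e₄, and for each i let N_i = N/⟨e_i, e₀+e₁+e₂+e₃+e₄⟩. Define T_{ij} : N_i → N_i^∨-type identifications by T_{ij}(e_k) = e_k* - e_i* for k ≠ i,j (in the dual lattice). Then the composite monodromy T_{ij,k} = T_{lj}⁻¹ T_{mj} T_{mi}⁻¹ T_{li} : N_l → N_l, where {i,j,k,l,m} = {0,1,2,3,4}, satisfies T_{ij,k}(e_j) = e_j + 5e_m, T_{ij,k}(e_k) = e_k, T_{ij,k}(e_m) = e_m. -/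
/-- `LatticeQuot i` is `N_i = N / ⟨e_i, e₀+e₁+e₂+e₃+e₄⟩` where `N = ℤ⁵`. -/
abbrev LatticeQuot (p : Fin 5) : Type :=
  (Fin 5 → ℤ) ⧸ Submodule.span ℤ {Pi.single p (1 : ℤ), fun _ => (1 : ℤ)}

/-- `DualLattice q` is `N_q^∨ = { Σ a_j e_j* : a_q = 0, Σ a_j = 0 }`, realized as a
submodule of the dual of `N = ℤ⁵`. -/
def DualLattice (q : Fin 5) : Submodule ℤ ((Fin 5 → ℤ) →ₗ[ℤ] ℤ) where
  carrier := {f | f (Pi.single q (1 : ℤ)) = 0 ∧ f (fun _ => (1 : ℤ)) = 0}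
  add_mem' := by
    intro f g hf hg
    simp only [Set.mem_setOf_eq, LinearMap.add_apply] at *
    exact ⟨by rw [hf.1, hg.1]; ring, by rw [hf.2, hg.2]; ring⟩
  zero_mem' := by simp
  smul_mem' := by
    intro c f hf
    simp only [Set.mem_setOf_eq, LinearMap.smul_apply] at *
    exact ⟨by rw [hf.1, smul_zero], by rw [hf.2, smul_zero]⟩

/-- Given identifications `T_{pq} : N_p ≅ N_q^∨` with `T_{pq}(e_r) = e_r* - e_p*` for
`r ≠ p, q`, the composite monodromy
`T_{ij,k} = T_{lj}⁻¹ ∘ T_{mj} ∘ T_{mi}⁻¹ ∘ T_{li} : N_l → N_l` (for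
`{i,j,k,l,m} = {0,1,2,3,4}`) satisfies `T_{ij,k}(e_j) = e_j + 5e_m`,
`T_{ij,k}(e_k) = e_k`, `T_{ij,k}(e_m) = e_m`. -/
theorem stmt16 (i j k l m : Fin 5)
    (hnd : ([i, j, k, l, m] : List (Fin 5)).Nodup)
    (hli : l ≠ i) (hmi : m ≠ i) (hmj : m ≠ j) (hlj : l ≠ j)
    (T : ∀ p q : Fin 5, p ≠ q → (LatticeQuot p ≃ₗ[ℤ] DualLattice q))
    (hT : ∀ (p q : Fin 5) (h : p ≠ q) (r : Fin 5), r ≠ p → r ≠ q →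
      ((T p q h (Submodule.Quotient.mk (Pi.single r (1 : ℤ))) :
          (Fin 5 → ℤ) →ₗ[ℤ] ℤ)) = (LinearMap.proj r : (Fin 5 → ℤ) →ₗ[ℤ] ℤ) - LinearMap.proj p) :
    ((T l i hli).trans (((T m i hmi).symm).trans
        ((T m j hmj).trans ((T l j hlj).symm))))
        (Submodule.Quotient.mk (Pi.single j (1 : ℤ))) =
      Submodule.Quotient.mk (Pi.single j (1 : ℤ) + (5 : ℤ) • Pi.single m (1 : ℤ)) ∧
    ((T l i hli).trans (((T m i hmi).symm).trans
        ((T m j hmj).trans ((T l j hlj).symm))))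
        (Submodule.Quotient.mk (Pi.single k (1 : ℤ))) =
      Submodule.Quotient.mk (Pi.single k (1 : ℤ)) ∧
    ((T l i hli).trans (((T m i hmi).symm).trans
        ((T m j hmj).trans ((T l j hlj).symm))))
        (Submodule.Quotient.mk (Pi.single m (1 : ℤ))) =
      Submodule.Quotient.mk (Pi.single m (1 : ℤ)) := by
  have huniv : ({i, j, k, l, m} : Finset (Fin 5)) = Finset.univ := by
    apply Finset.eq_univ_of_card
    rw [show ({i,j,k,l,m} : Finset (Fin 5)) = ([i,j,k,l,m] : List (Fin 5)).toFinset by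
      simp [List.toFinset_cons]]
    rw [List.toFinset_card_of_nodup hnd]
    rfl
  simp only [List.nodup_cons, List.mem_cons, List.not_mem_nil, or_false, not_or,
    List.nodup_nil, and_true, List.mem_singleton] at hnd
  obtain ⟨⟨hij, hik, hil, him⟩, ⟨hjk, hjl, hjm⟩, ⟨hkl, hkm⟩, hlm, -⟩ := hnd
  have hsum : Pi.single i (1:ℤ) + Pi.single j 1 + Pi.single k 1 + Pi.single l 1
      + Pi.single m 1 = fun _ => (1:ℤ) := by
    funext x
    have hx : x ∈ ({i, j, k, l, m} : Finset (Fin 5)) := huniv.symm ▸ Finset.mem_univ x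
    simp only [Finset.mem_insert, Finset.mem_singleton] at hx
    rcases hx with rfl|rfl|rfl|rfl|rfl <;>
      simp [Pi.single_apply, hij, hik, hil, him, hjk, hjl, hjm, hkl, hkm, hlm,
        Ne.symm hij, Ne.symm hik, Ne.symm hil, Ne.symm him, Ne.symm hjk, Ne.symm hjl,
        Ne.symm hjm, Ne.symm hkl, Ne.symm hkm, Ne.symm hlm]
  -- reduce composite to two forward equalities
  have key : ∀ (x y z : Fin 5 → ℤ),
      (T l i hli) (Submodule.Quotient.mk x) = (T m i hmi) (Submodule.Quotient.mk y) →
      (T m j hmj) (Submodule.Quotient.mk y) = (T l j hlj) (Submodule.Quotient.mk z) →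
      ((T l i hli).trans (((T m i hmi).symm).trans
        ((T m j hmj).trans ((T l j hlj).symm)))) (Submodule.Quotient.mk x)
        = Submodule.Quotient.mk z := by
    intro x y z h1 h2
    simp only [LinearEquiv.trans_apply]
    rw [h1, LinearEquiv.symm_apply_apply, h2, LinearEquiv.symm_apply_apply]
  -- quotient relations
  have hrel : ∀ (p : Fin 5) (a b : Fin 5 → ℤ),
      a - b = (fun _ => (1:ℤ)) - Pi.single p 1 →
      (Submodule.Quotient.mk a : LatticeQuot p) = Submodule.Quotient.mk b := by
    intro p a b hab
    rw [Submodule.Quotient.eq, hab]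
    exact sub_mem (Submodule.subset_span (by simp)) (Submodule.subset_span (by simp))
  refine ⟨key _ (Pi.single j 1 - Pi.single l 1) _ ?_ ?_,
    key _ (Pi.single k 1 - Pi.single l 1) _ ?_ ?_,
    key _ (-Pi.single l 1) _ ?_ ?_⟩
  · -- T l i (e_j) = T m i (e_j - e_l)
    apply Subtype.ext
    rw [Submodule.Quotient.mk_sub _, map_sub, Submodule.coe_sub,
      hT l i hli j hjl (Ne.symm hij), hT m i hmi j hjm (Ne.symm hij),
      hT m i hmi l hlm hli]
    abel
  · -- T m j (e_j - e_l) = T l j (e_j + 5 e_m)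
    apply Subtype.ext
    rw [show (Submodule.Quotient.mk (Pi.single j (1:ℤ) - Pi.single l 1) : LatticeQuot m)
        = Submodule.Quotient.mk (-Pi.single i 1 - Pi.single k 1 - Pi.single l 1
            - Pi.single l 1) from
      hrel m _ _ (by rw [← hsum]; abel)]
    rw [show (Submodule.Quotient.mk (Pi.single j (1:ℤ) + (5:ℤ) • Pi.single m 1)
          : LatticeQuot l)
        = Submodule.Quotient.mk (-Pi.single i 1 - Pi.single k 1 - Pi.single m 1
            + (5:ℤ) • Pi.single m 1) from
      hrel l _ _ (by rw [← hsum]; abel)]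
    simp only [Submodule.Quotient.mk_sub, Submodule.Quotient.mk_add,
      Submodule.Quotient.mk_neg, Submodule.Quotient.mk_smul,
      map_sub, map_add, map_neg, map_smul, Submodule.coe_sub, Submodule.coe_add,
      Submodule.coe_neg, Submodule.coe_smul]
    rw [hT m j hmj i him hij, hT m j hmj k hkm (Ne.symm hjk),
      hT m j hmj l hlm hlj, hT l j hlj i hil hij,
      hT l j hlj k hkl (Ne.symm hjk), hT l j hlj m (Ne.symm hlm) (Ne.symm hjm)]
    module
  · -- T l i (e_k) = T m i (e_k - e_l)
    apply Subtype.ext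
    rw [Submodule.Quotient.mk_sub _, map_sub, Submodule.coe_sub,
      hT l i hli k hkl (Ne.symm hik), hT m i hmi k hkm (Ne.symm hik),
      hT m i hmi l hlm hli]
    abel
  · -- T m j (e_k - e_l) = T l j (e_k)
    apply Subtype.ext
    rw [Submodule.Quotient.mk_sub _, map_sub, Submodule.coe_sub,
      hT m j hmj k hkm (Ne.symm hjk), hT m j hmj l hlm hlj,
      hT l j hlj k hkl (Ne.symm hjk)]
    abel
  · -- T l i (e_m) = T m i (-e_l)
    apply Subtype.ext
    rw [Submodule.Quotient.mk_neg _, map_neg, Submodule.coe_neg,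
      hT l i hli m (Ne.symm hlm) hmi, hT m i hmi l hlm hli]
    abel
  · -- T m j (-e_l) = T l j (e_m)
    apply Subtype.ext
    rw [Submodule.Quotient.mk_neg _, map_neg, Submodule.coe_neg,
      hT m j hmj l hlm hlj, hT l j hlj m (Ne.symm hlm) (Ne.symm hjm)]
    abel
end
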